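/- With the initial ratio θ_0 chosen adaptively, the AdaBB stepsizes satisfy α_i ≥ 1/(√2·L) for all i ≥ 1, and hence Σ_{i=1}^k α_i ≥ k/(√2·L) for every k ≥ 1. -/

import Mathlib

open scoped RealInnerProductSpace
open Finset Filter

noncomputable section

/-- The general AdaBB iteration (Algorithm 2 of the paper) for a convex differentiable
function `f : ℝⁿ → ℝ` that attains its minimum.  `f'` is the gradient of `f`,
`x` the iterates, `α` the stepsizes, `θ` the stepsize ratios and `lam` the short BB stepsizes. -/
structure AdaBB (n : ℕ) where
  f : EuclideanSpace ℝ (Fin n) → ℝ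
  f' : EuclideanSpace ℝ (Fin n) → EuclideanSpace ℝ (Fin n)
  x : ℕ → EuclideanSpace ℝ (Fin n)
  α : ℕ → ℝ
  θ : ℕ → ℝ
  lam : ℕ → ℝ
  hconv : ConvexOn ℝ Set.univ f
  hgrad : ∀ y, HasGradientAt f (f' y) y
  hmin : ∃ z, ∀ y, f z ≤ f y
  hα0 : 0 < α 0
  hθ0 : 0 ≤ θ 0
  hx1 : x 1 = x 0 - α 0 • f' (x 0)
  hne : ∀ k, f' (x (k + 1)) ≠ f' (x k)
  hlam : ∀ k, lam (k + 1) =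
    ⟪f' (x (k + 1)) - f' (x k), x (k + 1) - x k⟫ / ‖f' (x (k + 1)) - f' (x k)‖ ^ 2
  hlampos : ∀ k, 0 < lam (k + 1)
  hcase1 : ∀ k, α k ≤ lam (k + 1) →
    α (k + 1) = Real.sqrt (1 + θ k) * α k ∧ θ (k + 1) = α (k + 1) / α k
  hcase2 : ∀ k, α k / 2 < lam (k + 1) → lam (k + 1) < α k →
    (α (k + 1) = min (Real.sqrt (lam (k + 1) / (2 * (α k - lam (k + 1)))))
        (Real.sqrt ((1 + θ k) * lam (k + 1) / (2 * lam (k + 1) - α k))) * α k ∨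
      α (k + 1) = lam (k + 1)) ∧
    θ (k + 1) = 2 * α (k + 1) / α k - α (k + 1) / lam (k + 1)
  hcase3 : ∀ k, lam (k + 1) ≤ α k / 2 →
    (α (k + 1) = Real.sqrt (α k / (2 * (α k - lam (k + 1)))) * lam (k + 1) ∨
      α (k + 1) = lam (k + 1) / Real.sqrt 2) ∧
    θ (k + 1) = α (k + 1) / α k
  hstep : ∀ k, x (k + 2) = x (k + 1) - α (k + 1) • f' (x (k + 1))

namespace AdaBB

variable {n : ℕ}

/-- `M_k` (for `k ≥ 1`). -/
def M (S : AdaBB n) (k : ℕ) : ℝ :=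
  if S.α (k - 1) ≤ S.lam k then 0
  else if S.α (k - 1) / 2 < S.lam k then
    S.α k ^ 2 / (S.lam k * S.α (k - 1)) - S.α k ^ 2 / S.α (k - 1) ^ 2
  else S.α k ^ 2 / S.lam k ^ 2 - S.α k ^ 2 / (S.α (k - 1) * S.lam k)

/-- `P_k` for `k ≥ 1`. -/
def Paux (S : AdaBB n) (k : ℕ) : ℝ :=
  if S.α (k - 1) ≤ S.lam k then S.α k ^ 2 / S.α (k - 1)
  else if S.α (k - 1) / 2 < S.lam k then
    2 * S.α k ^ 2 / S.α (k - 1) - S.α k ^ 2 / S.lam k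
  else S.α k ^ 2 / S.α (k - 1)

/-- `P_k`, with the convention `P_0 = P_1 - α_0`. -/
def P (S : AdaBB n) (k : ℕ) : ℝ :=
  if k = 0 then S.Paux 1 - S.α 0 else S.Paux k

/-- `w_k = α_k + P_k - P_{k+1}`. -/
def w (S : AdaBB n) (k : ℕ) : ℝ := S.α k + S.P k - S.P (k + 1)

/-- The Lyapunov function `Υ_k` (for `k ≥ 1`), relative to a minimizer `xs` of `f`. -/
def Upsilon (S : AdaBB n) (xs : EuclideanSpace ℝ (Fin n)) (k : ℕ) : ℝ :=
  ‖S.x k - xs‖ ^ 2 + 2 * S.M k * ‖S.x k - S.x (k - 1)‖ ^ 2 +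
    (2 * S.α (k - 1) + 2 * S.P (k - 1)) * (S.f (S.x (k - 1)) - S.f xs)

end AdaBB

end

/-!
Every iterate stays in `B(x*, R)`: the Lyapunov function
`Υ_k = ‖x^k - x*‖² + 2 M_k ‖x^k - x^{k-1}‖² + 2 (α_{k-1} + P_{k-1}) (f(x^{k-1}) - f_*)`
dominates `‖x^k - x*‖²`, satisfies `Υ_1 ≤ R²`, and is nonincreasing. The decrease comes from
the one-step bound `α_k² ‖∇f(x^k)‖² ≤ P_k (f(x^{k-1}) - f(x^k)) + M_k ‖x^k - x^{k-1}‖²`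
(convexity plus the definition of `λ_k`), together with `M_k ≤ 1/2` and
`P_{k+1} ≤ α_k + P_k` (because `P_k = θ_k α_k`).

Cocoercivity on the ball then gives `λ_k ≥ 1/L`. If `λ_k < α_{k-1}`, every branch of the rule
gives `α_k ≥ λ_k / √2`. Otherwise `α_k ≥ α_{k-1}`, and for `k = 1` the choice of `θ_0` makes
`α_1 ≥ λ_1 / √2`. Induction on `k` then gives `α_k ≥ 1/(√2 L)`.
-/

theorem ConvexOn.add_inner_le_of_hasGradientAt {E : Type*} [NormedAddCommGroup E]
    [InnerProductSpace ℝ E] [CompleteSpace E] {f : E → ℝ} {g x : E}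
    (hf : ConvexOn ℝ Set.univ f) (hg : HasGradientAt f g x) (y : E) :
    f x + ⟪g, y - x⟫ ≤ f y := by
  have hline : ConvexOn ℝ Set.univ (f ∘ AffineMap.lineMap (k := ℝ) x y) := by
    simpa using hf.comp_affineMap (AffineMap.lineMap x y : ℝ →ᵃ[ℝ] E)
  have hderiv : HasDerivAt (f ∘ AffineMap.lineMap (k := ℝ) x y) ⟪g, y - x⟫ 0 := by
    have hg0 : HasFDerivAt f (InnerProductSpace.toDual ℝ E g)
        (AffineMap.lineMap x y (0 : ℝ)) := by
      simpa using hg.hasFDerivAt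
    simpa using hg0.comp_hasDerivAt (0 : ℝ) AffineMap.hasDerivAt_lineMap
  have := hline.le_slope_of_hasDerivAt (Set.mem_univ 0) (Set.mem_univ 1) one_pos hderiv
  rw [slope_def_field, Function.comp_apply, Function.comp_apply, AffineMap.lineMap_apply_zero,
    AffineMap.lineMap_apply_one, sub_zero, div_one] at this
  linarith

section GradientStep

variable {E : Type*} [NormedAddCommGroup E] [InnerProductSpace ℝ E]
  {f : E → ℝ} {f' : E → E} {x x' : E} {a l : ℝ}

theorem inner_grad_le_sub_le_of_step [CompleteSpace E] (hf : ConvexOn ℝ Set.univ f)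
    (hf' : ∀ y, HasGradientAt f (f' y) y) (hx' : x' = x - a • f' x) :
    a * ⟪f' x', f' x⟫ ≤ f x - f x' ∧ f x - f x' ≤ a * ‖f' x‖ ^ 2 := by
  subst hx'
  have h₁ := hf.add_inner_le_of_hasGradientAt (hf' (x - a • f' x)) x
  have h₂ := hf.add_inner_le_of_hasGradientAt (hf' x) (x - a • f' x)
  rw [sub_sub_cancel, real_inner_smul_right] at h₁
  rw [sub_sub_cancel_left, inner_neg_right, real_inner_smul_right,
    real_inner_self_eq_norm_sq] at h₂
  constructor <;> linarith

theorem mul_norm_sq_grad_eq_of_step (hx' : x' = x - a • f' x)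
    (hl : l * ‖f' x' - f' x‖ ^ 2 = ⟪f' x' - f' x, x' - x⟫) :
    l * ‖f' x'‖ ^ 2 = (2 * l - a) * ⟪f' x', f' x⟫ + (a - l) * ‖f' x‖ ^ 2 := by
  rw [hx', sub_sub_cancel_left, inner_neg_right, real_inner_smul_right, inner_sub_left,
    real_inner_self_eq_norm_sq, ← hx', norm_sub_sq_real] at hl
  linear_combination hl

theorem sq_mul_norm_sq_grad_sub_le_of_step (hx' : x' = x - a • f' x)
    (hl : l * ‖f' x' - f' x‖ ^ 2 = ⟪f' x' - f' x, x' - x⟫) (hl₀ : 0 ≤ l) :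
    l ^ 2 * ‖f' x' - f' x‖ ^ 2 ≤ a ^ 2 * ‖f' x‖ ^ 2 := by
  have hstep : ‖x' - x‖ = |a| * ‖f' x‖ := by
    rw [hx', sub_sub_cancel_left, norm_neg, norm_smul, Real.norm_eq_abs]
  have hcs : l * ‖f' x' - f' x‖ ^ 2 ≤ ‖f' x' - f' x‖ * (|a| * ‖f' x‖) :=
    hl ▸ hstep ▸ real_inner_le_norm _ _
  rcases (norm_nonneg (f' x' - f' x)).eq_or_lt with h₀ | h₀
  · rw [← h₀, zero_pow two_ne_zero, mul_zero]; positivity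
  have : l * ‖f' x' - f' x‖ ≤ |a| * ‖f' x‖ := by nlinarith
  calc l ^ 2 * ‖f' x' - f' x‖ ^ 2 = (l * ‖f' x' - f' x‖) ^ 2 := by ring
    _ ≤ (|a| * ‖f' x‖) ^ 2 := pow_le_pow_left₀ (by positivity) this 2
    _ = a ^ 2 * ‖f' x‖ ^ 2 := by rw [mul_pow, sq_abs]

theorem mul_norm_sq_grad_le_of_le_two_mul [CompleteSpace E] (hf : ConvexOn ℝ Set.univ f)
    (hf' : ∀ y, HasGradientAt f (f' y) y) (hx' : x' = x - a • f' x)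
    (hl : l * ‖f' x' - f' x‖ ^ 2 = ⟪f' x' - f' x, x' - x⟫) (h : a ≤ 2 * l) :
    l * a * ‖f' x'‖ ^ 2 ≤ (2 * l - a) * (f x - f x') + (a - l) * (a * ‖f' x‖ ^ 2) := by
  have hid := mul_norm_sq_grad_eq_of_step hx' hl
  have hdesc := (inner_grad_le_sub_le_of_step hf hf' hx').1
  have := mul_le_mul_of_nonneg_left hdesc (by linarith : 0 ≤ 2 * l - a)
  linear_combination a * hid + this

theorem mul_sq_norm_sq_grad_le_of_le [CompleteSpace E] (hf : ConvexOn ℝ Set.univ f)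
    (hf' : ∀ y, HasGradientAt f (f' y) y) (hx' : x' = x - a • f' x)
    (hl : l * ‖f' x' - f' x‖ ^ 2 = ⟪f' x' - f' x, x' - x⟫) (hl₀ : 0 ≤ l) (h : l ≤ a) :
    a * l ^ 2 * ‖f' x'‖ ^ 2 ≤ l ^ 2 * (f x - f x') + (a - l) * (a ^ 2 * ‖f' x‖ ^ 2) := by
  have hid := mul_norm_sq_grad_eq_of_step hx' hl
  have hdesc := (inner_grad_le_sub_le_of_step hf hf' hx').1
  have hcs := sq_mul_norm_sq_grad_sub_le_of_step hx' hl hl₀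
  have hexp := norm_sub_sq_real (f' x') (f' x)
  have h₁ := mul_le_mul_of_nonneg_left hdesc (sq_nonneg l)
  have h₂ := mul_le_mul_of_nonneg_left hcs (by linarith : 0 ≤ a - l)
  linear_combination l ^ 2 * hid - (a - l) * l ^ 2 * hexp + h₁ + h₂

theorem norm_sub_sq_le_of_step [CompleteSpace E] (hf : ConvexOn ℝ Set.univ f)
    (hf' : ∀ y, HasGradientAt f (f' y) y) (hx' : x' = x - a • f' x) (ha : 0 ≤ a) (z : E) :
    ‖x' - z‖ ^ 2 ≤ ‖x - z‖ ^ 2 - 2 * a * (f x - f z) + a ^ 2 * ‖f' x‖ ^ 2 := by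
  have hgrad := hf.add_inner_le_of_hasGradientAt (hf' x) z
  rw [← neg_sub x z, inner_neg_right] at hgrad
  rw [hx', sub_right_comm, norm_sub_sq_real, real_inner_smul_right, norm_smul, mul_pow,
    Real.norm_eq_abs, sq_abs, real_inner_comm]
  nlinarith [mul_le_mul_of_nonneg_left hgrad ha]

end GradientStep

namespace AdaBB

theorem stepsize_bounds_of_half_lt_of_lt {a l θ b : ℝ} (ha : 0 < a) (hθ : 0 ≤ θ)
    (h₁ : a / 2 < l) (h₂ : l < a)
    (hb : b = min (√(l / (2 * (a - l)))) (√((1 + θ) * l / (2 * l - a))) * a ∨ b = l) :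
    0 < b ∧ 2 * b ^ 2 * (a - l) ≤ l * a ^ 2 ∧ b ^ 2 * (2 * l - a) ≤ (1 + θ) * l * a ^ 2 ∧
      l ^ 2 ≤ 2 * b ^ 2 := by
  have hl : 0 < l := by linarith
  rcases hb with rfl | hb
  · set X₁ := l / (2 * (a - l))
    set X₂ := (1 + θ) * l / (2 * l - a)
    have e₁ : X₁ * (2 * (a - l)) = l := div_mul_cancel₀ _ (by linarith)
    have e₂ : X₂ * (2 * l - a) = (1 + θ) * l := div_mul_cancel₀ _ (by linarith)
    have hX₁ : 0 < X₁ := div_pos hl (by linarith)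
    have hX₂ : 0 < X₂ := div_pos (by positivity) (by linarith)
    have hsq : (min √X₁ √X₂ * a) ^ 2 = min X₁ X₂ * a ^ 2 := by
      rw [← Real.sqrt_monotone.map_min, mul_pow, Real.sq_sqrt (le_min hX₁.le hX₂.le)]
    rw [hsq]
    refine ⟨by positivity, ?_, ?_, ?_⟩
    · calc 2 * (min X₁ X₂ * a ^ 2) * (a - l) = min X₁ X₂ * (2 * (a - l)) * a ^ 2 := by ring
        _ ≤ X₁ * (2 * (a - l)) * a ^ 2 := mul_le_mul_of_nonneg_right
          (mul_le_mul_of_nonneg_right (min_le_left X₁ X₂) (by linarith)) (sq_nonneg a)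
        _ = l * a ^ 2 := by rw [e₁]
    · calc min X₁ X₂ * a ^ 2 * (2 * l - a) = min X₁ X₂ * (2 * l - a) * a ^ 2 := by ring
        _ ≤ X₂ * (2 * l - a) * a ^ 2 := mul_le_mul_of_nonneg_right
          (mul_le_mul_of_nonneg_right (min_le_right X₁ X₂) (by linarith)) (sq_nonneg a)
        _ = (1 + θ) * l * a ^ 2 := by rw [e₂]
    · rcases min_choice X₁ X₂ with h | h <;> rw [h]
      · refine le_of_mul_le_mul_right ?_ (by linarith : 0 < 2 * (a - l))
        rw [show 2 * (X₁ * a ^ 2) * (2 * (a - l)) = 2 * a ^ 2 * (X₁ * (2 * (a - l))) by ring, e₁]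
        nlinarith [mul_pos hl (sub_pos.mpr h₂)]
      · refine le_of_mul_le_mul_right ?_ (by linarith : 0 < 2 * l - a)
        rw [show 2 * (X₂ * a ^ 2) * (2 * l - a) = 2 * a ^ 2 * (X₂ * (2 * l - a)) by ring, e₂]
        nlinarith [mul_pos hl (sub_pos.mpr h₂), mul_nonneg hθ (mul_pos hl (sq_pos_of_pos ha)).le]
  · rw [hb]
    refine ⟨hl, ?_, ?_, by nlinarith⟩
    · nlinarith [sq_nonneg (a - 2 * l)]
    · nlinarith [mul_nonneg hθ (sq_nonneg a), mul_pos hl (sub_pos.mpr h₂)]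

theorem stepsize_bounds_of_le_half {a l b : ℝ} (hl : 0 < l) (h : l ≤ a / 2)
    (hb : b = √(a / (2 * (a - l))) * l ∨ b = l / √2) :
    0 < b ∧ 2 * b ^ 2 * (a - l) ≤ a * l ^ 2 ∧ b ^ 2 ≤ l ^ 2 ∧ l ^ 2 ≤ 2 * b ^ 2 := by
  rcases hb with rfl | rfl
  · set X := a / (2 * (a - l))
    have e : X * (2 * (a - l)) = a := div_mul_cancel₀ _ (by linarith)
    have hX : 0 < X := div_pos (by linarith) (by linarith)
    rw [mul_pow, Real.sq_sqrt hX.le]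
    refine ⟨by positivity, le_of_eq (by linear_combination l ^ 2 * e), ?_, ?_⟩
    · nlinarith [mul_pos hl hl]
    · nlinarith [mul_pos hl hl]
  · rw [div_pow, Real.sq_sqrt zero_le_two]
    refine ⟨by positivity, ?_, ?_, ?_⟩ <;> nlinarith [mul_pos hl hl]

variable {n : ℕ} (S : AdaBB n)

theorem step_eq : ∀ k, S.x (k + 1) = S.x k - S.α k • S.f' (S.x k)
  | 0 => S.hx1
  | k + 1 => S.hstep k

theorem norm_sub_sq_succ (k : ℕ) :
    ‖S.x (k + 1) - S.x k‖ ^ 2 = S.α k ^ 2 * ‖S.f' (S.x k)‖ ^ 2 := by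
  rw [S.step_eq k, sub_sub_cancel_left, norm_neg, norm_smul, mul_pow, Real.norm_eq_abs, sq_abs]

theorem lam_succ_mul_norm_sq (k : ℕ) :
    S.lam (k + 1) * ‖S.f' (S.x (k + 1)) - S.f' (S.x k)‖ ^ 2 =
      ⟪S.f' (S.x (k + 1)) - S.f' (S.x k), S.x (k + 1) - S.x k⟫ := by
  have hne : ‖S.f' (S.x (k + 1)) - S.f' (S.x k)‖ ^ 2 ≠ 0 :=
    pow_ne_zero 2 (norm_ne_zero_iff.mpr (sub_ne_zero.mpr (S.hne k)))
  rw [S.hlam k, div_mul_cancel₀ _ hne]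

theorem alpha_pos_and_theta_nonneg (k : ℕ) : 0 < S.α k ∧ 0 ≤ S.θ k := by
  induction k with
  | zero => exact ⟨S.hα0, S.hθ0⟩
  | succ k ih =>
    obtain ⟨ha, hθ⟩ := ih
    have hl := S.hlampos k
    rcases le_or_gt (S.α k) (S.lam (k + 1)) with h₁ | h₁
    · obtain ⟨hα, hθ'⟩ := S.hcase1 k h₁
      have hpos : 0 < S.α (k + 1) := hα ▸ by positivity
      exact ⟨hpos, hθ' ▸ by positivity⟩
    rcases le_or_gt (S.lam (k + 1)) (S.α k / 2) with h₃ | h₂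
    · obtain ⟨hα, hθ'⟩ := S.hcase3 k h₃
      have hpos := (stepsize_bounds_of_le_half hl h₃ hα).1
      exact ⟨hpos, hθ' ▸ by positivity⟩
    · obtain ⟨hα, hθ'⟩ := S.hcase2 k h₂ h₁
      have hpos := (stepsize_bounds_of_half_lt_of_lt ha hθ h₂ h₁ hα).1
      refine ⟨hpos, ?_⟩
      rw [hθ', show 2 * S.α (k + 1) / S.α k - S.α (k + 1) / S.lam (k + 1) =
        S.α (k + 1) * (2 * S.lam (k + 1) - S.α k) / (S.α k * S.lam (k + 1)) by field_simp]
      exact div_nonneg (mul_nonneg hpos.le (by linarith)) (by positivity)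

theorem alpha_pos (k : ℕ) : 0 < S.α k := (S.alpha_pos_and_theta_nonneg k).1

theorem theta_nonneg (k : ℕ) : 0 ≤ S.θ k := (S.alpha_pos_and_theta_nonneg k).2

theorem sq_alpha_succ_of_le {k : ℕ} (h : S.α k ≤ S.lam (k + 1)) :
    S.α (k + 1) ^ 2 = (1 + S.θ k) * S.α k ^ 2 := by
  rw [(S.hcase1 k h).1, mul_pow, Real.sq_sqrt (by linarith [S.theta_nonneg k])]

theorem alpha_succ_bounds_of_half_lt_of_lt {k : ℕ} (h₁ : S.α k / 2 < S.lam (k + 1))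
    (h₂ : S.lam (k + 1) < S.α k) :
    2 * S.α (k + 1) ^ 2 * (S.α k - S.lam (k + 1)) ≤ S.lam (k + 1) * S.α k ^ 2 ∧
      S.α (k + 1) ^ 2 * (2 * S.lam (k + 1) - S.α k) ≤
        (1 + S.θ k) * S.lam (k + 1) * S.α k ^ 2 ∧
      S.lam (k + 1) ^ 2 ≤ 2 * S.α (k + 1) ^ 2 :=
  (stepsize_bounds_of_half_lt_of_lt (S.alpha_pos k) (S.theta_nonneg k) h₁ h₂
    (S.hcase2 k h₁ h₂).1).2

theorem alpha_succ_bounds_of_le_half {k : ℕ} (h : S.lam (k + 1) ≤ S.α k / 2) :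
    2 * S.α (k + 1) ^ 2 * (S.α k - S.lam (k + 1)) ≤ S.α k * S.lam (k + 1) ^ 2 ∧
      S.α (k + 1) ^ 2 ≤ S.lam (k + 1) ^ 2 ∧ S.lam (k + 1) ^ 2 ≤ 2 * S.α (k + 1) ^ 2 :=
  (stepsize_bounds_of_le_half (S.hlampos k) h (S.hcase3 k h).1).2

theorem M_succ_nonneg (k : ℕ) : 0 ≤ S.M (k + 1) := by
  have ha := S.alpha_pos k
  have hl := S.hlampos k
  simp only [M, Nat.add_sub_cancel]
  split_ifs with h₁ h₂
  · exact le_rfl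
  · rw [show S.α (k + 1) ^ 2 / (S.lam (k + 1) * S.α k) - S.α (k + 1) ^ 2 / S.α k ^ 2 =
      S.α (k + 1) ^ 2 * (S.α k - S.lam (k + 1)) / (S.lam (k + 1) * S.α k ^ 2) by field_simp]
    exact div_nonneg (mul_nonneg (sq_nonneg _) (by linarith)) (by positivity)
  · rw [show S.α (k + 1) ^ 2 / S.lam (k + 1) ^ 2 - S.α (k + 1) ^ 2 / (S.α k * S.lam (k + 1)) =
      S.α (k + 1) ^ 2 * (S.α k - S.lam (k + 1)) / (S.α k * S.lam (k + 1) ^ 2) by field_simp]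
    exact div_nonneg (mul_nonneg (sq_nonneg _) (by linarith)) (by positivity)

theorem M_succ_le_half (k : ℕ) : S.M (k + 1) ≤ 1 / 2 := by
  have ha := S.alpha_pos k
  have hl := S.hlampos k
  simp only [M, Nat.add_sub_cancel]
  split_ifs with h₁ h₂
  · norm_num
  · have := (S.alpha_succ_bounds_of_half_lt_of_lt h₂ (not_le.mp h₁)).1
    rw [div_sub_div _ _ (by positivity) (by positivity), div_le_iff₀ (by positivity)]
    nlinarith
  · have := (S.alpha_succ_bounds_of_le_half (not_lt.mp h₂)).1
    rw [div_sub_div _ _ (by positivity) (by positivity), div_le_iff₀ (by positivity)]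
    nlinarith

theorem Paux_succ_eq (k : ℕ) : S.Paux (k + 1) = S.θ (k + 1) * S.α (k + 1) := by
  have ha := S.alpha_pos k
  have hl := S.hlampos k
  simp only [Paux, Nat.add_sub_cancel]
  split_ifs with h₁ h₂
  · rw [(S.hcase1 k h₁).2]; field_simp
  · rw [(S.hcase2 k h₂ (not_le.mp h₁)).2]; field_simp
  · rw [(S.hcase3 k (not_lt.mp h₂)).2]; field_simp

theorem Paux_succ_le (k : ℕ) : S.Paux (k + 1) ≤ (1 + S.θ k) * S.α k := by
  have ha := S.alpha_pos k
  have hl := S.hlampos k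
  have hθ := S.theta_nonneg k
  simp only [Paux, Nat.add_sub_cancel]
  split_ifs with h₁ h₂
  · rw [S.sq_alpha_succ_of_le h₁]; field_simp; rfl
  · have := (S.alpha_succ_bounds_of_half_lt_of_lt h₂ (not_le.mp h₁)).2.1
    rw [div_sub_div _ _ (by positivity) (by positivity), div_le_iff₀ (by positivity)]
    nlinarith
  · have := (S.alpha_succ_bounds_of_le_half (not_lt.mp h₂)).2.1
    rw [div_le_iff₀ ha]
    nlinarith [mul_nonneg hθ (sq_nonneg (S.α k)),
      mul_self_le_mul_self hl.le (by linarith : S.lam (k + 1) ≤ S.α k)]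

theorem P_zero : S.P 0 = S.Paux 1 - S.α 0 := rfl

theorem P_succ (k : ℕ) : S.P (k + 1) = S.Paux (k + 1) := rfl

theorem P_succ_le (k : ℕ) : S.P (k + 1) ≤ S.α k + S.P k := by
  cases k with
  | zero => simp only [P_zero, P_succ, zero_add]; linarith
  | succ k =>
    rw [P_succ, P_succ, S.Paux_succ_eq k]
    linarith [S.Paux_succ_le (k + 1)]

theorem alpha_add_P_nonneg : ∀ k, 0 ≤ S.α k + S.P k
  | 0 => by
    rw [P_zero, add_sub_cancel, S.Paux_succ_eq 0]
    exact mul_nonneg (S.theta_nonneg 1) (S.alpha_pos 1).le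
  | k + 1 => by
    rw [P_succ, S.Paux_succ_eq k]
    nlinarith [S.alpha_pos (k + 1), S.theta_nonneg (k + 1)]

theorem sq_alpha_mul_sq_norm_grad_le (k : ℕ) :
    S.α (k + 1) ^ 2 * ‖S.f' (S.x (k + 1))‖ ^ 2 ≤
      S.Paux (k + 1) * (S.f (S.x k) - S.f (S.x (k + 1))) +
        S.M (k + 1) * ‖S.x (k + 1) - S.x k‖ ^ 2 := by
  have ha := S.alpha_pos k
  have hl := S.hlampos k
  have hstep := S.step_eq k
  have hbb := S.lam_succ_mul_norm_sq k
  rw [S.norm_sub_sq_succ k]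
  simp only [M, Paux, Nat.add_sub_cancel]
  set a := S.α k
  set l := S.lam (k + 1)
  set b := S.α (k + 1)
  set q := ‖S.f' (S.x (k + 1))‖ ^ 2
  set p := ‖S.f' (S.x k)‖ ^ 2
  set Δ := S.f (S.x k) - S.f (S.x (k + 1))
  split_ifs with h₁ h₂
  · have key := mul_norm_sq_grad_le_of_le_two_mul S.hconv S.hgrad hstep hbb (by linarith)
    have hdesc := (inner_grad_le_sub_le_of_step S.hconv S.hgrad hstep).2
    -- `a - l ≤ 0` and `Δ ≤ a p` turn `key` into `l a q ≤ l Δ`.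
    have hq : a * q ≤ Δ := by
      refine le_of_mul_le_mul_left ?_ hl
      nlinarith [mul_le_mul_of_nonneg_left hdesc (sub_nonneg.mpr h₁)]
    calc b ^ 2 * q = b ^ 2 / a * (a * q) := by field_simp
      _ ≤ b ^ 2 / a * Δ := mul_le_mul_of_nonneg_left hq (by positivity)
      _ = b ^ 2 / a * Δ + 0 * (a ^ 2 * p) := by ring
  · have key := mul_norm_sq_grad_le_of_le_two_mul S.hconv S.hgrad hstep hbb (by linarith)
    calc b ^ 2 * q = b ^ 2 / (l * a) * (l * a * q) := by field_simp
      _ ≤ b ^ 2 / (l * a) * ((2 * l - a) * Δ + (a - l) * (a * p)) :=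
        mul_le_mul_of_nonneg_left key (by positivity)
      _ = (2 * b ^ 2 / a - b ^ 2 / l) * Δ + (b ^ 2 / (l * a) - b ^ 2 / a ^ 2) * (a ^ 2 * p) := by
        field_simp
  · have key := mul_sq_norm_sq_grad_le_of_le S.hconv S.hgrad hstep hbb hl.le (by linarith)
    calc b ^ 2 * q = b ^ 2 / (a * l ^ 2) * (a * l ^ 2 * q) := by field_simp
      _ ≤ b ^ 2 / (a * l ^ 2) * (l ^ 2 * Δ + (a - l) * (a ^ 2 * p)) :=
        mul_le_mul_of_nonneg_left key (by positivity)
      _ = b ^ 2 / a * Δ + (b ^ 2 / l ^ 2 - b ^ 2 / (a * l)) * (a ^ 2 * p) := by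
        field_simp

variable (xs : EuclideanSpace ℝ (Fin n))

theorem Upsilon_succ (k : ℕ) :
    S.Upsilon xs (k + 1) = ‖S.x (k + 1) - xs‖ ^ 2 + 2 * S.M (k + 1) * ‖S.x (k + 1) - S.x k‖ ^ 2 +
      (2 * S.α k + 2 * S.P k) * (S.f (S.x k) - S.f xs) := rfl

theorem sq_norm_sub_le_Upsilon_succ (hxs : ∀ y, S.f xs ≤ S.f y) (k : ℕ) :
    ‖S.x (k + 1) - xs‖ ^ 2 ≤ S.Upsilon xs (k + 1) := by
  have h₁ : 0 ≤ 2 * S.M (k + 1) * ‖S.x (k + 1) - S.x k‖ ^ 2 :=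
    mul_nonneg (by linarith [S.M_succ_nonneg k]) (sq_nonneg _)
  have h₂ : 0 ≤ (2 * S.α k + 2 * S.P k) * (S.f (S.x k) - S.f xs) :=
    mul_nonneg (by linarith [S.alpha_add_P_nonneg k]) (sub_nonneg.mpr (hxs _))
  rw [Upsilon_succ]
  linarith

theorem Upsilon_one_le :
    S.Upsilon xs 1 ≤ ‖S.x 0 - xs‖ ^ 2 + S.α 0 ^ 2 * (1 + 2 * S.M 1) * ‖S.f' (S.x 0)‖ ^ 2 +
      (2 * S.P 1 - 2 * S.α 0) * (S.f (S.x 0) - S.f xs) := by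
  have hdesc := norm_sub_sq_le_of_step S.hconv S.hgrad S.hx1 S.hα0.le xs
  rw [Upsilon_succ, S.norm_sub_sq_succ 0, P_zero, ← P_succ]
  nlinarith

theorem Upsilon_succ_succ_le (hxs : ∀ y, S.f xs ≤ S.f y) (k : ℕ) :
    S.Upsilon xs (k + 2) ≤ S.Upsilon xs (k + 1) := by
  have hdesc := norm_sub_sq_le_of_step S.hconv S.hgrad (S.step_eq (k + 1))
    (S.alpha_pos (k + 1)).le xs
  have hgrad := S.sq_alpha_mul_sq_norm_grad_le k
  have hM : 0 ≤ (1 - 2 * S.M (k + 2)) * (S.α (k + 1) ^ 2 * ‖S.f' (S.x (k + 1))‖ ^ 2) :=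
    mul_nonneg (by linarith [S.M_succ_le_half (k + 1)]) (by positivity)
  have hP : S.P (k + 1) * (S.f (S.x k) - S.f xs) ≤ (S.α k + S.P k) * (S.f (S.x k) - S.f xs) :=
    mul_le_mul_of_nonneg_right (S.P_succ_le k) (sub_nonneg.mpr (hxs _))
  rw [Upsilon_succ, Upsilon_succ, S.norm_sub_sq_succ (k + 1)]
  rw [P_succ] at hP ⊢
  nlinarith

theorem norm_iterate_sub_le (hxs : ∀ y, S.f xs ≤ S.f y) {R : ℝ} (hR0 : 0 ≤ R)
    (hR2 : R ^ 2 = ‖S.x 0 - xs‖ ^ 2 + S.α 0 ^ 2 * (1 + 2 * S.M 1) * ‖S.f' (S.x 0)‖ ^ 2 +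
      max (2 * S.P 1 - 2 * S.α 0) 0 * (S.f (S.x 0) - S.f xs)) (k : ℕ) :
    ‖S.x k - xs‖ ≤ R := by
  have hf₀ := sub_nonneg.mpr (hxs (S.x 0))
  have hUpsilon (k : ℕ) : S.Upsilon xs (k + 1) ≤ R ^ 2 := by
    induction k with
    | zero =>
      have := mul_le_mul_of_nonneg_right (le_max_left (2 * S.P 1 - 2 * S.α 0) 0) hf₀
      linarith [S.Upsilon_one_le xs]
    | succ k ih => exact (S.Upsilon_succ_succ_le xs hxs k).trans ih
  refine (pow_le_pow_iff_left₀ (norm_nonneg _) hR0 two_ne_zero).mp ?_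
  cases k with
  | zero =>
    have : 0 ≤ S.α 0 ^ 2 * (1 + 2 * S.M 1) * ‖S.f' (S.x 0)‖ ^ 2 :=
      mul_nonneg (mul_nonneg (sq_nonneg _) (by linarith [S.M_succ_nonneg 0])) (sq_nonneg _)
    nlinarith [mul_nonneg (le_max_right (2 * S.P 1 - 2 * S.α 0) 0) hf₀]
  | succ k => exact (S.sq_norm_sub_le_Upsilon_succ xs hxs k).trans (hUpsilon k)

theorem le_lam_succ_of_le_inner {c : ℝ} {k : ℕ}
    (h : c * ‖S.f' (S.x (k + 1)) - S.f' (S.x k)‖ ^ 2 ≤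
      ⟪S.f' (S.x (k + 1)) - S.f' (S.x k), S.x (k + 1) - S.x k⟫) :
    c ≤ S.lam (k + 1) := by
  rw [← S.lam_succ_mul_norm_sq k] at h
  exact le_of_mul_le_mul_right h (pow_pos (norm_pos_iff.mpr (sub_ne_zero.mpr (S.hne k))) 2)

theorem lam_sq_le_two_mul_alpha_sq_of_lt {k : ℕ} (h : S.lam (k + 1) < S.α k) :
    S.lam (k + 1) ^ 2 ≤ 2 * S.α (k + 1) ^ 2 := by
  rcases le_or_gt (S.lam (k + 1)) (S.α k / 2) with h₃ | h₂
  · exact (S.alpha_succ_bounds_of_le_half h₃).2.2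
  · exact (S.alpha_succ_bounds_of_half_lt_of_lt h₂ h).2.2

theorem alpha_le_alpha_succ_of_le {k : ℕ} (h : S.α k ≤ S.lam (k + 1)) : S.α k ≤ S.α (k + 1) := by
  rw [(S.hcase1 k h).1]
  exact le_mul_of_one_le_left (S.alpha_pos k).le
    (Real.one_le_sqrt.mpr (by linarith [S.theta_nonneg k]))

theorem lam_one_sq_le_two_mul_alpha_one_sq
    (hθ0 : S.θ 0 = if √2 * S.α 0 ≤ S.lam 1 then S.lam 1 ^ 2 / (2 * S.α 0 ^ 2) - 1 else 0) :
    S.lam 1 ^ 2 ≤ 2 * S.α 1 ^ 2 := by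
  rcases lt_or_ge (S.lam 1) (S.α 0) with h | h
  · exact S.lam_sq_le_two_mul_alpha_sq_of_lt h
  have ha := S.hα0
  rw [S.sq_alpha_succ_of_le h]
  split_ifs at hθ0 with hbig
  · rw [hθ0]; field_simp; linarith
  · have : S.lam 1 ^ 2 < (√2 * S.α 0) ^ 2 :=
      pow_lt_pow_left₀ (not_le.mp hbig) (S.hlampos 0).le two_ne_zero
    rw [mul_pow, Real.sq_sqrt zero_le_two] at this
    rw [hθ0]; linarith

theorem div_sqrt_two_le_alpha_succ
    (hθ0 : S.θ 0 = if √2 * S.α 0 ≤ S.lam 1 then S.lam 1 ^ 2 / (2 * S.α 0 ^ 2) - 1 else 0)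
    {c : ℝ} (hc : ∀ k, c ≤ S.lam (k + 1)) (i : ℕ) : c / √2 ≤ S.α (i + 1) := by
  have of_sq_le {k : ℕ} (hk : S.lam (k + 1) ^ 2 ≤ 2 * S.α (k + 1) ^ 2) : c / √2 ≤ S.α (k + 1) := by
    have : S.lam (k + 1) ≤ S.α (k + 1) * √2 := by
      refine abs_le_of_sq_le_sq' ?_ (by positivity [S.alpha_pos (k + 1)]) |>.2
      rwa [mul_pow, Real.sq_sqrt zero_le_two, mul_comm]
    rw [div_le_iff₀ (by positivity)]
    exact (hc k).trans this
  induction i with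
  | zero => exact of_sq_le (S.lam_one_sq_le_two_mul_alpha_one_sq hθ0)
  | succ i ih =>
    rcases lt_or_ge (S.lam (i + 2)) (S.α (i + 1)) with h | h
    · exact of_sq_le (S.lam_sq_le_two_mul_alpha_sq_of_lt h)
    · exact ih.trans (S.alpha_le_alpha_succ_of_le h)

end AdaBB

open scoped RealInnerProductSpace in
theorem adabb_lower_bound_alphai_general (n : ℕ) (S : AdaBB n)
    (xs : EuclideanSpace ℝ (Fin n)) (hxs : ∀ y, S.f xs ≤ S.f y)
    (R : ℝ) (hR0 : 0 ≤ R)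
    (hR2 : R ^ 2 = ‖S.x 0 - xs‖ ^ 2 + S.α 0 ^ 2 * (1 + 2 * S.M 1) * ‖S.f' (S.x 0)‖ ^ 2 +
      max (2 * S.P 1 - 2 * S.α 0) 0 * (S.f (S.x 0) - S.f xs))
    (L : ℝ)
    (hcoco : ∀ x y : EuclideanSpace ℝ (Fin n), ‖x - xs‖ ≤ R → ‖y - xs‖ ≤ R →
      (1 / L) * ‖S.f' x - S.f' y‖ ^ 2 ≤ ⟪S.f' x - S.f' y, x - y⟫)
    (hθ0 : S.θ 0 = if Real.sqrt 2 * S.α 0 ≤ S.lam 1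
      then S.lam 1 ^ 2 / (2 * S.α 0 ^ 2) - 1 else 0) :
    (∀ i : ℕ, 1 ≤ i → 1 / (Real.sqrt 2 * L) ≤ S.α i) ∧
    (∀ k : ℕ, 1 ≤ k → (k : ℝ) / (Real.sqrt 2 * L) ≤ ∑ i ∈ Finset.Icc 1 k, S.α i) := by
  have hball := S.norm_iterate_sub_le xs hxs hR0 hR2
  have hlam (k : ℕ) : 1 / L ≤ S.lam (k + 1) :=
    S.le_lam_succ_of_le_inner (hcoco _ _ (hball (k + 1)) (hball k))
  have hα : ∀ i : ℕ, 1 ≤ i → 1 / (√2 * L) ≤ S.α i := by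
    rintro (_ | i) hi
    · omega
    · rw [mul_comm, ← div_div]
      exact S.div_sqrt_two_le_alpha_succ hθ0 hlam i
  refine ⟨hα, fun k _ => ?_⟩
  calc (k : ℝ) / (√2 * L)
      _ = #(Icc 1 k) • (1 / (√2 * L)) := by
        rw [Nat.card_Icc, Nat.add_sub_cancel, nsmul_eq_mul, mul_one_div]
      _ ≤ ∑ i ∈ Icc 1 k, S.α i := card_nsmul_le_sum _ _ _ fun i hi => hα i (mem_Icc.mp hi).1

open scoped RealInnerProductSpace in
/-- Lemma 4.1: with the initial ratio `θ_0` chosen adaptively as in (4.2), the AdaBB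
stepsizes satisfy `α_i ≥ 1/(√2·L)` for all `i ≥ 1`, hence `Σ_{i=1}^k α_i ≥ k/(√2·L)`. -/
theorem adabb_lower_bound_alphai (n : ℕ) (S : AdaBB n)
    (xs : EuclideanSpace ℝ (Fin n)) (hxs : ∀ y, S.f xs ≤ S.f y)
    (R : ℝ) (hR0 : 0 ≤ R)
    (hR2 : R ^ 2 = ‖S.x 0 - xs‖ ^ 2 + S.α 0 ^ 2 * (1 + 2 * S.M 1) * ‖S.f' (S.x 0)‖ ^ 2 +
      max (2 * S.P 1 - 2 * S.α 0) 0 * (S.f (S.x 0) - S.f xs))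
    (L : ℝ) (hL : 0 < L)
    (hcoco : ∀ x y : EuclideanSpace ℝ (Fin n), ‖x - xs‖ ≤ R → ‖y - xs‖ ≤ R →
      (1 / L) * ‖S.f' x - S.f' y‖ ^ 2 ≤ ⟪S.f' x - S.f' y, x - y⟫)
    (hθ0 : S.θ 0 = if Real.sqrt 2 * S.α 0 ≤ S.lam 1
      then S.lam 1 ^ 2 / (2 * S.α 0 ^ 2) - 1 else 0) :
    (∀ i : ℕ, 1 ≤ i → 1 / (Real.sqrt 2 * L) ≤ S.α i) ∧
    (∀ k : ℕ, 1 ≤ k → (k : ℝ) / (Real.sqrt 2 * L) ≤ ∑ i ∈ Finset.Icc 1 k, S.α i) :=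
  adabb_lower_bound_alphai_general n S xs hxs R hR0 hR2 L hcoco hθ0
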